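/- Let n ≥ 2 and v, ξ' ∈ ℝ^{n−1} with ‖ξ'‖ < 1. Write g := ⟨v,ξ'⟩, m := ‖v‖², s := ‖ξ'‖², define r₀ := ((1+ig)² − (1−s)(1+m))^{1/2} using the principal branch of the complex square root, and set a₊ := (i − g + i·r₀)/(1+m) and a₋ := (i − g − i·r₀)/(1+m). Then Re r₀ < 1, and consequently both Im a₊ = (1 + Re r₀)/(1+m) > 0 and Im a₋ = (1 − Re r₀)/(1+m) > 0. -/

import Mathlib

open Complex

/-! Squaring maps the line `Re w = 1` onto the parabola `(Im z)² = 4 (1 - Re z)`, so the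
principal square root has real part `< 1` exactly inside that parabola. The discriminant
`z = (1 + ig)² - (1 - s)(1 + m)` has `(Im z)² = 4g²` and `4 (1 - Re z) = 4g² + 4(1 - s)(1 + m)`,
so it lies inside as soon as `(1 - s)(1 + m) > 0`. -/

/-- The principal-branch square root `r₀` of the discriminant of the symbol of the
boundary-flattened conjugated Laplacian (at `h = 0`), with `g = ⟨v,ξ'⟩`,
`m = ‖v‖²`, `s = ‖ξ'‖²`. -/
noncomputable def r0 (g m s : ℝ) : ℂ :=
  ((1 + Complex.I * (g : ℂ)) ^ 2 - (1 - (s : ℂ)) * (1 + (m : ℂ))) ^ ((1 : ℂ) / 2)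

/-- The root `a₊ = (i − g + i·r₀)/(1+m)`. -/
noncomputable def aPlus (g m s : ℝ) : ℂ :=
  (Complex.I - (g : ℂ) + Complex.I * r0 g m s) / (1 + (m : ℂ))

/-- The root `a₋ = (i − g − i·r₀)/(1+m)`. -/
noncomputable def aMinus (g m s : ℝ) : ℂ :=
  (Complex.I - (g : ℂ) - Complex.I * r0 g m s) / (1 + (m : ℂ))

namespace Complex

theorem re_cpow_inv_two_lt_one {z : ℂ} (hz : z.im ^ 2 < 4 * (1 - z.re)) :
    (z ^ (2⁻¹ : ℂ)).re < 1 := by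
  have hre : z.re < 1 := by nlinarith [sq_nonneg z.im]
  have hnorm : ‖z‖ < 2 - z.re := by
    refine lt_of_pow_lt_pow_left₀ 2 (by linarith) ?_
    rw [Complex.sq_norm, normSq_apply]
    nlinarith
  rw [cpow_inv_two_re, Real.sqrt_lt' one_pos]
  linarith

end Complex

section Roots

variable (g m s : ℝ)

theorem r0_re_nonneg : 0 ≤ (r0 g m s).re := by
  rw [r0, one_div, cpow_inv_two_re]
  positivity

variable {g m s} in
theorem r0_re_lt_one (h : 0 < (1 - s) * (1 + m)) : (r0 g m s).re < 1 := by
  rw [r0, one_div]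
  apply re_cpow_inv_two_lt_one
  simp only [sub_re, sub_im, mul_re, mul_im, sq, add_re, add_im, one_re, one_im, I_re, I_im,
    ofReal_re, ofReal_im]
  nlinarith

theorem aPlus_im : (aPlus g m s).im = (1 + (r0 g m s).re) / (1 + m) := by
  rw [aPlus, ← ofReal_one, ← ofReal_add, div_ofReal_im]
  simp

theorem aMinus_im : (aMinus g m s).im = (1 - (r0 g m s).re) / (1 + m) := by
  rw [aMinus, ← ofReal_one, ← ofReal_add, div_ofReal_im]
  simp

end Roots

theorem roots_in_upper_half_plane_general (n : ℕ)
    (v ξ' : EuclideanSpace ℝ (Fin (n - 1))) (hξ' : ‖ξ'‖ < 1)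
    (g m s : ℝ) (hm : m = ‖v‖ ^ 2) (hs : s = ‖ξ'‖ ^ 2) :
    (r0 g m s).re < 1 ∧
      (aPlus g m s).im = (1 + (r0 g m s).re) / (1 + m) ∧ 0 < (aPlus g m s).im ∧
      (aMinus g m s).im = (1 - (r0 g m s).re) / (1 + m) ∧ 0 < (aMinus g m s).im := by
  have hs1 : s < 1 := by
    rw [hs]
    nlinarith [norm_nonneg ξ']
  have hm0 : 0 ≤ m := hm ▸ sq_nonneg _
  have hlt : (r0 g m s).re < 1 := r0_re_lt_one (mul_pos (by linarith) (by linarith))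
  have hnn := r0_re_nonneg g m s
  refine ⟨hlt, aPlus_im g m s, ?_, aMinus_im g m s, ?_⟩
  · rw [aPlus_im]
    exact div_pos (by linarith) (by linarith)
  · rw [aMinus_im]
    exact div_pos (by linarith) (by linarith)

/-- For `‖ξ'‖ < 1` (with `g = ⟪v,ξ'⟫`, `m = ‖v‖²`, `s = ‖ξ'‖²`): `Re r₀ < 1`,
and consequently `Im a₊ = (1 + Re r₀)/(1+m) > 0` and
`Im a₋ = (1 − Re r₀)/(1+m) > 0`. -/
theorem roots_in_upper_half_plane (n : ℕ) (hn : 2 ≤ n)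
    (v ξ' : EuclideanSpace ℝ (Fin (n - 1))) (hξ' : ‖ξ'‖ < 1)
    (g m s : ℝ) (hg : g = inner ℝ v ξ') (hm : m = ‖v‖ ^ 2) (hs : s = ‖ξ'‖ ^ 2) :
    (r0 g m s).re < 1 ∧
      (aPlus g m s).im = (1 + (r0 g m s).re) / (1 + m) ∧ 0 < (aPlus g m s).im ∧
      (aMinus g m s).im = (1 - (r0 g m s).re) / (1 + m) ∧ 0 < (aMinus g m s).im :=
  roots_in_upper_half_plane_general n v ξ' hξ' g m s hm hs
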